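/- arXiv:0805.4654 — 6 statements merged into one kernel-verified Lean document; each statement's English description precedes it below -/
import Mathlib

section
/- Let X be a finite set, let n ≥ 1, and let f_1,…,f_n : X → X be functions. Suppose there exists a positive integer N such that every N-fold composition f_{i_1} ∘ ⋯ ∘ f_{i_N} of members of the family has a range consisting of a single element. Then there exists a partial order ≤ on the cartesian product X × X such that: (i) each diagonal element (x,x) is a minimal element; (ii) each pair (x,y) ∈ X × X has some diagonal element (z,z) with (z,z) ≤ (x,y); and (iii) for every i ∈ {1,…,n} and every pair (x,y) with x ≠ y, one has (f_i(x), f_i(y)) ≤ (x,y). -/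
/-! A composition that fixes two distinct points cannot be synchronizing, and neither can any of
its powers; since every sufficiently long word is synchronizing, only the empty word fixes a pair
`(x, y)` with `x ≠ y`. Hence "`q` is the image of the off-diagonal pair `p` under some word" is
antisymmetric, and it is the required order. -/

section

variable {ι X : Type*} (f : ι → X → X)

def wordComp (l : List ι) : X → X := l.foldr (fun i g => f i ∘ g) id

lemma wordComp_append (l m : List ι) : wordComp f (l ++ m) = wordComp f l ∘ wordComp f m := by
  induction l with
  | nil => rfl
  | cons i l ih => simp only [wordComp, List.cons_append, List.foldr_cons] at ih ⊢; rw [ih]; rfl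

lemma wordComp_flatten_replicate (w : List ι) (k : ℕ) :
    wordComp f (List.replicate k w).flatten = (wordComp f w)^[k] := by
  induction k with
  | zero => rfl
  | succ k ih =>
    rw [List.replicate_succ, List.flatten_cons, wordComp_append, ih, Function.iterate_succ']

def IsSynchronizing (N : ℕ) : Prop :=
  ∀ l : List ι, l.length = N → ∃ c : X, ∀ x, wordComp f l x = c

variable {f}

lemma IsSynchronizing.exists_const_of_le {N : ℕ} (hf : IsSynchronizing f N) {l : List ι}
    (hl : N ≤ l.length) : ∃ c : X, ∀ x, wordComp f l x = c := by
  obtain ⟨c, hc⟩ := hf (l.take N) (by rw [List.length_take]; omega)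
  refine ⟨c, fun x => ?_⟩
  rw [← List.take_append_drop N l, wordComp_append, Function.comp_apply, hc]

lemma IsSynchronizing.eq_nil_of_fixes {N : ℕ} (hf : IsSynchronizing f N)
    {w : List ι} {x y : X} (hxy : x ≠ y) (hx : wordComp f w x = x) (hy : wordComp f w y = y) :
    w = [] := by
  by_contra hw
  have hlen : N ≤ (List.replicate N w).flatten.length := by
    simpa [List.length_flatten, List.sum_replicate] using
      Nat.le_mul_of_pos_right N (List.length_pos_iff.mpr hw)
  obtain ⟨c, hc⟩ := hf.exists_const_of_le hlen
  rw [wordComp_flatten_replicate] at hc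
  exact hxy <| calc
    x = (wordComp f w)^[N] x := (Function.iterate_fixed hx N).symm
    _ = (wordComp f w)^[N] y := (hc x).trans (hc y).symm
    _ = y := Function.iterate_fixed hy N

variable (f)

def pairLE (q p : X × X) : Prop :=
  q = p ∨ (p.1 ≠ p.2 ∧ ∃ l, Prod.map (wordComp f l) (wordComp f l) p = q)

lemma pairLE_trans {p q r : X × X} (hpq : pairLE f p q) (hqr : pairLE f q r) : pairLE f p r := by
  rcases hpq with rfl | ⟨hq, l, rfl⟩
  · exact hqr
  rcases hqr with rfl | ⟨hr, m, rfl⟩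
  · exact Or.inr ⟨hq, l, rfl⟩
  · exact Or.inr ⟨hr, l ++ m, by simp only [wordComp_append]; rfl⟩

lemma IsSynchronizing.pairLE_antisymm {N : ℕ} (hf : IsSynchronizing f N)
    {p q : X × X} (hqp : pairLE f q p) (hpq : pairLE f p q) : q = p := by
  rcases hqp with rfl | ⟨hp, l, rfl⟩
  · rfl
  rcases hpq with hpq | ⟨-, m, hm⟩
  · exact hpq.symm
  have hml : m ++ l = [] := hf.eq_nil_of_fixes hp
    (by rw [wordComp_append]; exact congrArg Prod.fst hm)
    (by rw [wordComp_append]; exact congrArg Prod.snd hm)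
  obtain ⟨-, rfl⟩ := List.append_eq_nil_iff.mp hml
  rfl

lemma IsSynchronizing.isPartialOrder_pairLE {N : ℕ} (hf : IsSynchronizing f N) :
    IsPartialOrder (X × X) (pairLE f) where
  refl _ := Or.inl rfl
  trans _ _ _ := pairLE_trans f
  antisymm _ _ := hf.pairLE_antisymm f

lemma eq_of_pairLE_diag {x : X} {p : X × X} (h : pairLE f p (x, x)) : p = (x, x) :=
  h.resolve_right fun h => h.1 rfl

lemma IsSynchronizing.exists_diag_pairLE {N : ℕ} (hf : IsSynchronizing f N) (i : ι)
    (p : X × X) : ∃ z, pairLE f (z, z) p := by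
  by_cases hp : p.1 = p.2
  · exact ⟨p.1, Or.inl (Prod.ext rfl hp)⟩
  obtain ⟨c, hc⟩ := hf (List.replicate N i) List.length_replicate
  exact ⟨c, Or.inr ⟨hp, List.replicate N i, Prod.ext (hc p.1) (hc p.2)⟩⟩

lemma pairLE_apply (i : ι) {x y : X} (hxy : x ≠ y) : pairLE f (f i x, f i y) (x, y) :=
  Or.inr ⟨hxy, [i], rfl⟩

end

theorem stmt_1_general {X : Type*} {n : ℕ} (hn : 1 ≤ n) (f : Fin n → X → X)
    (h : ∃ N : ℕ, 0 < N ∧ ∀ l : List (Fin n), l.length = N →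
      ∃ c : X, ∀ x : X, l.foldr (fun i g => f i ∘ g) id x = c) :
    ∃ le : X × X → X × X → Prop, IsPartialOrder (X × X) le ∧
      (∀ (x : X) (p : X × X), le p (x, x) → p = (x, x)) ∧
      (∀ p : X × X, ∃ z : X, le (z, z) p) ∧
      (∀ (i : Fin n) (x y : X), x ≠ y → le (f i x, f i y) (x, y)) := by
  obtain ⟨N, -, hf⟩ := h
  have hf : IsSynchronizing f N := hf
  exact ⟨pairLE f, hf.isPartialOrder_pairLE f, fun _ _ => eq_of_pairLE_diag f,
    hf.exists_diag_pairLE f ⟨0, hn⟩, fun i _ _ => pairLE_apply f i⟩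

theorem stmt_1 {X : Type*} [Finite X] {n : ℕ} (hn : 1 ≤ n) (f : Fin n → X → X)
    (h : ∃ N : ℕ, 0 < N ∧ ∀ l : List (Fin n), l.length = N →
      ∃ c : X, ∀ x : X, l.foldr (fun i g => f i ∘ g) id x = c) :
    ∃ le : X × X → X × X → Prop, IsPartialOrder (X × X) le ∧
      (∀ (x : X) (p : X × X), le p (x, x) → p = (x, x)) ∧
      (∀ p : X × X, ∃ z : X, le (z, z) p) ∧
      (∀ (i : Fin n) (x y : X), x ≠ y → le (f i x, f i y) (x, y)) :=
  stmt_1_general hn f h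
end

section
/- Let X be a finite set, let n ≥ 1, and let f_1,…,f_n : X → X be functions. Define subsets Σ_m ⊆ X × X inductively by Σ_0 = {(x,x) : x ∈ X} and Σ_{m+1} = Σ_m ∪ {(x,y) ∈ X × X : (f_i(x), f_i(y)) ∈ Σ_m for all i = 1,…,n}. Then the following are equivalent: (a) there exists a positive integer N such that every N-fold composition f_{i_1} ∘ ⋯ ∘ f_{i_N} (arbitrary indices i_t ∈ {1,…,n}) has a range consisting of a single element; (b) ∪_{m≥0} Σ_m = X × X. -/
/-!
A pair `(x, y)` lies in `Σ_m` exactly when every word of length `m` in the `f i` identifies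
`x` and `y`. So (a) puts every pair in `Σ_N`. Conversely, as `X × X` is finite and the `Σ_m`
increase, a single `Σ_N` is all of `X × X`, and then every word of length `N + 1` identifies
every `x` with a fixed `x₀`.
-/

def SigmaSet {X : Type*} {n : ℕ} (f : Fin n → X → X) : ℕ → Set (X × X)
  | 0 => {p | p.1 = p.2}
  | m + 1 => SigmaSet f m ∪ {p | ∀ i, (f i p.1, f i p.2) ∈ SigmaSet f m}

open Filter Set

theorem Monotone.eventually_eq_univ_of_iUnion_eq_univ {α ι : Type*} [Finite α] [Preorder ι]
    [IsDirectedOrder ι] [Nonempty ι] {s : ι → Set α} (hs : Monotone s)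
    (h : ⋃ i, s i = univ) : ∀ᶠ i in atTop, s i = univ := by
  choose idx hidx using fun a => mem_iUnion.mp (h ▸ mem_univ a)
  obtain ⟨N, hN⟩ := Finite.bddAbove_range idx
  filter_upwards [eventually_ge_atTop N] with i hi
  exact eq_univ_of_forall fun a => hs ((hN (mem_range_self a)).trans hi) (hidx a)

section evalWord

variable {X : Type*} {n : ℕ} (f : Fin n → X → X)

def evalWord (l : List (Fin n)) : X → X := l.foldr (fun i g => f i ∘ g) id

@[simp]
lemma evalWord_nil : evalWord f [] = id := rfl

@[simp]
lemma evalWord_cons (i : Fin n) (l : List (Fin n)) :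
    evalWord f (i :: l) = f i ∘ evalWord f l := rfl

lemma evalWord_append_singleton (l : List (Fin n)) (i : Fin n) :
    evalWord f (l ++ [i]) = evalWord f l ∘ f i := by
  induction l with
  | nil => rfl
  | cons j l ih => simp [ih, Function.comp_assoc]

end evalWord

namespace SigmaSet

variable {X : Type*} {n : ℕ} (f : Fin n → X → X)

theorem mem_iff_forall_evalWord_eq {m : ℕ} {x y : X} :
    (x, y) ∈ SigmaSet f m ↔
      ∀ l : List (Fin n), l.length = m → evalWord f l x = evalWord f l y := by
  induction m generalizing x y with
  | zero => simp [SigmaSet, List.length_eq_zero_iff]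
  | succ m ih =>
    constructor
    · rintro (h | h) l hl
      · obtain ⟨i, t, rfl⟩ := List.exists_cons_of_length_eq_add_one hl
        simpa using congrArg (f i) (ih.mp h t (by simpa using hl))
      · obtain rfl | ⟨t, i, rfl⟩ := l.eq_nil_or_concat'
        · simp at hl
        · simpa [evalWord_append_singleton] using ih.mp (h i) t (by simpa using hl)
    · refine fun h => Or.inr fun i => ih.mpr fun t ht => ?_
      simpa [evalWord_append_singleton] using h (t ++ [i]) (by simpa using ht)

theorem monotone : Monotone (SigmaSet f) :=
  monotone_nat_of_le_succ fun _ => subset_union_left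

end SigmaSet

theorem stmt_2_general {X : Type*} [Finite X] [Nonempty X] {n : ℕ}
    (f : Fin n → X → X) :
    (∃ N : ℕ, 0 < N ∧ ∀ l : List (Fin n), l.length = N →
      ∃ c : X, ∀ x : X, l.foldr (fun i g => f i ∘ g) id x = c) ↔
    (⋃ m, SigmaSet f m) = Set.univ := by
  constructor
  · rintro ⟨N, -, hconst⟩
    refine eq_univ_of_forall fun ⟨x, y⟩ => mem_iUnion.mpr ⟨N, ?_⟩
    refine (SigmaSet.mem_iff_forall_evalWord_eq f).mpr fun l hl => ?_
    obtain ⟨c, hc⟩ := hconst l hl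
    exact (hc x).trans (hc y).symm
  · intro h
    obtain ⟨N, hN⟩ :=
      ((SigmaSet.monotone f).eventually_eq_univ_of_iUnion_eq_univ h).exists_forall_of_atTop
    obtain ⟨x₀⟩ := ‹Nonempty X›
    refine ⟨N + 1, N.succ_pos, fun l hl => ⟨evalWord f l x₀, fun x => ?_⟩⟩
    have hx : (x, x₀) ∈ SigmaSet f (N + 1) := hN (N + 1) N.le_succ ▸ mem_univ _
    exact (SigmaSet.mem_iff_forall_evalWord_eq f).mp hx l hl

theorem stmt_2 {X : Type*} [Finite X] [Nonempty X] {n : ℕ} (hn : 1 ≤ n)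
    (f : Fin n → X → X) :
    (∃ N : ℕ, 0 < N ∧ ∀ l : List (Fin n), l.length = N →
      ∃ c : X, ∀ x : X, l.foldr (fun i g => f i ∘ g) id x = c) ↔
    (⋃ m, SigmaSet f m) = Set.univ :=
  stmt_2_general f
end

section
/- Let Y be a finite set with a distinguished element †, let N ≥ 1, and let g_1,…,g_N : Y → Y be functions each satisfying g_j(†) = †. Suppose there exists a positive integer M such that every M-fold composition g_{j_1} ∘ ⋯ ∘ g_{j_M} (arbitrary indices j_t ∈ {1,…,N}) has range equal to the single element set {†}. Then there exists a partial order ≤ on Y such that: (i) the only minimal element of (Y, ≤) is †; and (ii) g_j(y) ≤ y for every j ∈ {1,…,N} and every y ∈ Y. -/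
/-!
Order `Y` by `z ≤ y` iff `z = w y` for some composition `w` of the `g_j` (possibly empty).
This is reflexive and transitive, and the `g_j` decrease it by construction. If `a ≤ b ≤ a`
with `a ≠ b`, then some nonempty composition `w` fixes `b`; its `M`-th power is a composition
of length at least `M`, which sends `b` to `†`, so `b = †` and then `a = †` too. Finally every
`y` lies above `†` (apply any `M`-fold composition), so `†` is the only minimal element.
-/

namespace WordMap

variable {α ι : Type*} (g : ι → α → α)

/-- The composition `g j₁ ∘ ⋯ ∘ g jₘ` along the word `[j₁, …, jₘ]`. -/
def wordMap (l : List ι) : α → α :=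
  l.foldr (fun j G => g j ∘ G) id

def IsWordImage (z y : α) : Prop :=
  ∃ l : List ι, wordMap g l y = z

@[simp]
theorem wordMap_nil : wordMap g [] = id := rfl

@[simp]
theorem wordMap_cons (j : ι) (l : List ι) : wordMap g (j :: l) = g j ∘ wordMap g l := rfl

theorem wordMap_append (l₁ l₂ : List ι) :
    wordMap g (l₁ ++ l₂) = wordMap g l₁ ∘ wordMap g l₂ := by
  induction l₁ with
  | nil => rfl
  | cons j l ih => simp only [List.cons_append, wordMap_cons, ih, Function.comp_assoc]

theorem wordMap_flatten_replicate (n : ℕ) (l : List ι) :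
    wordMap g (List.replicate n l).flatten = (wordMap g l)^[n] := by
  induction n with
  | zero => rfl
  | succ n ih =>
    rw [List.replicate_succ, List.flatten_cons, wordMap_append, ih, Function.iterate_succ']

variable {g}

theorem wordMap_apply_of_forall_apply_eq {dag : α} (hg : ∀ j, g j dag = dag) (l : List ι) :
    wordMap g l dag = dag := by
  induction l with
  | nil => rfl
  | cons j l ih => simp [ih, hg]

section Nilpotent

variable {dag : α} {M : ℕ} (hM : ∀ l : List ι, l.length = M → ∀ y, wordMap g l y = dag)
include hM

theorem wordMap_apply_of_le_length {l : List ι} (hl : M ≤ l.length) (y : α) :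
    wordMap g l y = dag := by
  rw [← List.take_append_drop M l, wordMap_append, Function.comp_apply]
  exact hM _ (List.length_take_of_le hl) _

theorem eq_of_wordMap_apply_eq_self {l : List ι} (hl : l ≠ []) {x : α}
    (hx : wordMap g l x = x) : x = dag := by
  have hlen : M ≤ (List.replicate M l).flatten.length := by
    simpa using Nat.le_mul_of_pos_right M (List.length_pos_of_ne_nil hl)
  rw [← wordMap_apply_of_le_length hM hlen x, wordMap_flatten_replicate,
    Function.iterate_fixed hx]

theorem isPartialOrder_isWordImage (hg : ∀ j, g j dag = dag) :
    IsPartialOrder α (IsWordImage g) where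
  refl _ := ⟨[], rfl⟩
  trans _ _ _ := fun ⟨l₁, h₁⟩ ⟨l₂, h₂⟩ => ⟨l₁ ++ l₂, by rw [wordMap_append, ← h₁, ← h₂]; rfl⟩
  antisymm a b := by
    rintro ⟨l₁, rfl⟩ ⟨l₂, h₂⟩
    by_cases hl₁ : l₁ = []
    · simp [hl₁]
    have hb : b = dag := by
      refine eq_of_wordMap_apply_eq_self hM (l := l₂ ++ l₁) ?_ ?_
      · simp [hl₁]
      · rw [wordMap_append, Function.comp_apply, h₂]
    subst hb
    rw [wordMap_apply_of_forall_apply_eq hg]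

theorem forall_isWordImage_imp_eq_iff (hg : ∀ j, g j dag = dag) (j₀ : ι) (y : α) :
    (∀ z, IsWordImage g z y → z = y) ↔ y = dag := by
  constructor
  · intro hmin
    exact (hmin dag ⟨List.replicate M j₀, hM _ List.length_replicate y⟩).symm
  · rintro rfl z ⟨l, rfl⟩
    exact wordMap_apply_of_forall_apply_eq hg l

end Nilpotent

end WordMap

theorem stmt_3_general {Y : Type*} (dag : Y) {N : ℕ} (hN : 1 ≤ N)
    (g : Fin N → Y → Y) (hg : ∀ j, g j dag = dag)
    (h : ∃ M : ℕ, 0 < M ∧ ∀ l : List (Fin N), l.length = M →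
      ∀ y : Y, l.foldr (fun j G => g j ∘ G) id y = dag) :
    ∃ le : Y → Y → Prop, IsPartialOrder Y le ∧
      (∀ y : Y, (∀ z, le z y → z = y) ↔ y = dag) ∧
      (∀ (j : Fin N) (y : Y), le (g j y) y) := by
  obtain ⟨M, -, hM⟩ := h
  exact ⟨WordMap.IsWordImage g, WordMap.isPartialOrder_isWordImage hM hg,
    WordMap.forall_isWordImage_imp_eq_iff hM hg ⟨0, hN⟩, fun j _ => ⟨[j], rfl⟩⟩

theorem stmt_3 {Y : Type*} [Finite Y] (dag : Y) {N : ℕ} (hN : 1 ≤ N)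
    (g : Fin N → Y → Y) (hg : ∀ j, g j dag = dag)
    (h : ∃ M : ℕ, 0 < M ∧ ∀ l : List (Fin N), l.length = M →
      ∀ y : Y, l.foldr (fun j G => g j ∘ G) id y = dag) :
    ∃ le : Y → Y → Prop, IsPartialOrder Y le ∧
      (∀ y : Y, (∀ z, le z y → z = y) ↔ y = dag) ∧
      (∀ (j : Fin N) (y : Y), le (g j y) y) :=
  stmt_3_general dag hN g hg h
end

section
/- Let n ≥ 2 and k ≥ 2. Let σ be a permutation of W_n^k and φ a permutation of W_n^{k-1}, and set τ = (id_1 × φ) ∘ σ ∘ (φ^{-1} × id_1), where id_1 × φ denotes the permutation of W_n^k fixing the first letter and applying φ to the last k−1 letters, and φ^{-1} × id_1 denotes the permutation of W_n^k applying φ^{-1} to the first k−1 letters and fixing the last letter. Then f_i^τ = φ ∘ f_i^σ ∘ φ^{-1} for every letter i ∈ {1,…,n}. -/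
/-!
Inverting, `τ⁻¹ = (φ × id_1) ∘ σ⁻¹ ∘ (id_1 × φ⁻¹)`. The factor `id_1 × φ⁻¹` sends `i.α` to
`i.φ⁻¹(α)`, and `φ × id_1` acts on the first `k` letters by `φ`, so the first `k` letters of
`τ⁻¹(i.α)` are `φ (f_i^σ (φ⁻¹ α))`.
-/

/-- For a permutation `σ` of words of length `k+1` over the alphabet `Fin n`, and a letter `i`,
`fword σ i α` is the word `β` of length `k` such that `σ (β.m) = i.α` for some letter `m`,
i.e. the first `k` letters of `σ⁻¹ (i.α)`.  (The map `f_i^σ` of the paper.) -/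
def fword {n k : ℕ} (σ : Equiv.Perm (Fin (k + 1) → Fin n)) (i : Fin n)
    (α : Fin k → Fin n) : Fin k → Fin n :=
  Fin.init (σ.symm (Fin.cons i α))

/-- Splitting a word of length `c = a + b` into its first `a` letters and last `b` letters. -/
def wordSplit (n a b c : ℕ) (h : a + b = c) :
    (Fin c → Fin n) ≃ (Fin a → Fin n) × (Fin b → Fin n) :=
  (Equiv.arrowCongr (finCongr h.symm) (Equiv.refl (Fin n))).trans
    ((Equiv.arrowCongr finSumFinEquiv.symm (Equiv.refl (Fin n))).trans
      (Equiv.sumArrowEquivProdArrow _ _ _))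

/-- The permutation `φ × ρ` of words of length `c = a + b`: `φ` acts on the first `a` letters
and `ρ` on the last `b` letters. -/
def prodPerm (n a b c : ℕ) (h : a + b = c) (φ : Equiv.Perm (Fin a → Fin n))
    (ρ : Equiv.Perm (Fin b → Fin n)) : Equiv.Perm (Fin c → Fin n) :=
  ((wordSplit n a b c h).trans (φ.prodCongr ρ)).trans (wordSplit n a b c h).symm

theorem prodPerm_symm (n a b c : ℕ) (h : a + b = c) (φ : Equiv.Perm (Fin a → Fin n))
    (ρ : Equiv.Perm (Fin b → Fin n)) :
    (prodPerm n a b c h φ ρ).symm = prodPerm n a b c h φ.symm ρ.symm :=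
  rfl

theorem wordSplit_fst {n k : ℕ} (w : Fin (k + 1) → Fin n) :
    (wordSplit n k 1 (k + 1) rfl w).1 = Fin.init w := by
  funext j
  simp [wordSplit, Fin.init, Fin.castSucc]

theorem init_wordSplit_symm {n k : ℕ} (pq : (Fin k → Fin n) × (Fin 1 → Fin n)) :
    Fin.init ((wordSplit n k 1 (k + 1) rfl).symm pq) = pq.1 := by
  obtain ⟨p, q⟩ := pq
  funext j
  simp [wordSplit, Fin.init, Fin.castSucc]

theorem init_prodPerm {n k : ℕ} (φ : Equiv.Perm (Fin k → Fin n))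
    (ρ : Equiv.Perm (Fin 1 → Fin n)) (w : Fin (k + 1) → Fin n) :
    Fin.init (prodPerm n k 1 (k + 1) rfl φ ρ w) = φ (Fin.init w) := by
  rw [prodPerm, Equiv.trans_apply, Equiv.trans_apply, init_wordSplit_symm,
    Equiv.prodCongr_apply, Prod.map_fst, wordSplit_fst]

theorem wordSplit_cons {n k : ℕ} (h : 1 + k = k + 1) (i : Fin n) (α : Fin k → Fin n) :
    wordSplit n 1 k (k + 1) h (Fin.cons i α) = (fun _ => i, α) := by
  refine Prod.ext (funext fun x => ?_) (funext fun x => ?_)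
  · simp [wordSplit, Equiv.sumArrowEquivProdArrow, Fin.cast]
  · have hx : Fin.cast h (Fin.natAdd 1 x) = x.succ := Fin.ext (Nat.add_comm 1 x)
    simp [wordSplit, Equiv.sumArrowEquivProdArrow, hx]

theorem prodPerm_refl_cons {n k : ℕ} (h : 1 + k = k + 1) (φ : Equiv.Perm (Fin k → Fin n))
    (i : Fin n) (α : Fin k → Fin n) :
    prodPerm n 1 k (k + 1) h (Equiv.refl _) φ (Fin.cons i α) = Fin.cons i (φ α) := by
  rw [prodPerm, Equiv.trans_apply, Equiv.trans_apply, Equiv.symm_apply_eq, wordSplit_cons,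
    wordSplit_cons, Equiv.prodCongr_apply, Prod.map_apply, Equiv.refl_apply]

theorem stmt_6_general {n : ℕ} {k : ℕ}
    (σ : Equiv.Perm (Fin (k + 1) → Fin n)) (φ : Equiv.Perm (Fin k → Fin n)) :
    ∀ (i : Fin n) (α : Fin k → Fin n),
      fword (((prodPerm n k 1 (k + 1) rfl φ.symm (Equiv.refl _)).trans σ).trans
          (prodPerm n 1 k (k + 1) (Nat.add_comm 1 k) (Equiv.refl _) φ)) i α
        = φ (fword σ i (φ.symm α)) := by
  intro i α
  simp only [fword, Equiv.symm_trans_apply, prodPerm_symm, Equiv.refl_symm, prodPerm_refl_cons,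
    init_prodPerm, Equiv.symm_symm]

/-- `τ = (id_1 × φ) ∘ σ ∘ (φ⁻¹ × id_1)` satisfies `f_i^τ = φ ∘ f_i^σ ∘ φ⁻¹`. -/
theorem stmt_6 {n : ℕ} (hn : 2 ≤ n) {k : ℕ} (hk : 1 ≤ k)
    (σ : Equiv.Perm (Fin (k + 1) → Fin n)) (φ : Equiv.Perm (Fin k → Fin n)) :
    ∀ (i : Fin n) (α : Fin k → Fin n),
      fword (((prodPerm n k 1 (k + 1) rfl φ.symm (Equiv.refl _)).trans σ).trans
          (prodPerm n 1 k (k + 1) (Nat.add_comm 1 k) (Equiv.refl _) φ)) i α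
        = φ (fword σ i (φ.symm α)) :=
  stmt_6_general σ φ
end

section
/- Let n ≥ 2 and k ≥ 2, and let σ be a permutation of W_n^k. Then the number of permutations τ of W_n^k such that f_i^τ = f_i^σ for all i ∈ {1,…,n} is exactly (n!)^{n^{k-1}}. -/
/-! The maps `f_i^τ` only see `Fin.init ∘ τ⁻¹`, so the permutations in question form a left
coset of the group of permutations preserving `Fin.init`. That group is the product, over the
`n ^ k` fibres of `Fin.init`, of the symmetric groups of the fibres, each of which has `n`
elements (one for each last letter). -/

open Equiv

def Equiv.Perm.compSymmEqEquiv {α ι : Type*} (f : α → ι) (σ : Perm α) :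
    {τ : Perm α // f ∘ τ.symm = f ∘ σ.symm} ≃ {g : Perm α // f ∘ g = f} :=
  (Equiv.inv (Perm α)).trans (Equiv.mulRight σ) |>.subtypeEquiv fun τ => by
    constructor
    · intro h
      funext x
      simpa using congrFun h (σ x)
    · intro h
      funext x
      simpa using congrFun h (σ.symm x)

lemma Equiv.Perm.card_compSymm_eq {α ι : Type*} [Fintype α] [DecidableEq α] [Fintype ι]
    [DecidableEq ι] (f : α → ι) (σ : Perm α) :
    Nat.card {τ : Perm α // f ∘ τ.symm = f ∘ σ.symm} =
      ∏ i, (Fintype.card {a // f a = i}).factorial := by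
  rw [Nat.card_congr (Perm.compSymmEqEquiv f σ), Nat.card_eq_fintype_card,
    DomMulAct.stabilizer_card]

def Fin.initFiberEquiv {n k : ℕ} (β : Fin k → Fin n) :
    {w : Fin (k + 1) → Fin n // Fin.init w = β} ≃ Fin n where
  toFun w := w.1 (Fin.last k)
  invFun m := ⟨Fin.snoc β m, Fin.init_snoc (α := fun _ => Fin n) m β⟩
  left_inv w := Subtype.ext <| by
    simp only [← w.2, Fin.snoc_init_self]
  right_inv m := Fin.snoc_last (α := fun _ => Fin n) m β

lemma fword_eq_fword_iff {n k : ℕ} (σ τ : Perm (Fin (k + 1) → Fin n)) :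
    (∀ i, fword τ i = fword σ i) ↔ Fin.init ∘ τ.symm = Fin.init ∘ σ.symm := by
  constructor
  · intro h
    funext w
    simpa [fword, Fin.cons_self_tail] using congrFun (h (w 0)) (Fin.tail w)
  · intro h i
    funext α
    exact congrFun h (Fin.cons i α)

theorem stmt_7_general {n : ℕ} {k : ℕ}
    (σ : Equiv.Perm (Fin (k + 1) → Fin n)) :
    Nat.card {τ : Equiv.Perm (Fin (k + 1) → Fin n) // ∀ i, fword τ i = fword σ i}
      = Nat.factorial n ^ n ^ k := by
  simp_rw [fword_eq_fword_iff σ, Perm.card_compSymm_eq,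
    fun β => Fintype.card_congr (Fin.initFiberEquiv β)]
  rw [Finset.prod_const, Finset.card_univ, Fintype.card_fun, Fintype.card_fin, Fintype.card_fin]

theorem stmt_7 {n : ℕ} (hn : 2 ≤ n) {k : ℕ} (hk : 1 ≤ k)
    (σ : Equiv.Perm (Fin (k + 1) → Fin n)) :
    Nat.card {τ : Equiv.Perm (Fin (k + 1) → Fin n) // ∀ i, fword τ i = fword σ i}
      = Nat.factorial n ^ n ^ k :=
  stmt_7_general σ
end

section
/- Among the 24 permutations of the 4-element set W_2^2, exactly 8 satisfy the diagonal condition, and exactly 4 satisfy both the diagonal condition and the annihilation condition. -/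
/-- The diagonal condition: `⋃ m, Σ_m = X × X` for the family `f_i^σ`. -/
def diagCond {n k : ℕ} (σ : Equiv.Perm (Fin (k + 1) → Fin n)) : Prop :=
  (⋃ m, SigmaSet (fword σ) m) = Set.univ

/-- The set `𝒲`: off-diagonal pairs of words of length `k`, together with a point `†` (`none`). -/
def OffDiag (n k : ℕ) := Option {q : (Fin k → Fin n) × (Fin k → Fin n) // q.1 ≠ q.2}

/-- The map `f_{ij}^σ` on `𝒲`: it sends `(α,β)` to `(γ,δ)` if `σ(γm) = iα` and `σ(δm) = jβ`
for some letter `m`, and to `†` otherwise; `†` is fixed. -/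
def fpair {n k : ℕ} (σ : Equiv.Perm (Fin (k + 1) → Fin n)) (i j : Fin n) :
    OffDiag n k → OffDiag n k
  | none => none
  | some ⟨(α, β), _⟩ =>
      if h : (σ.symm (Fin.cons i α)) (Fin.last k) = (σ.symm (Fin.cons j β)) (Fin.last k) ∧
          Fin.init (σ.symm (Fin.cons i α)) ≠ Fin.init (σ.symm (Fin.cons j β)) then
        some ⟨(Fin.init (σ.symm (Fin.cons i α)), Fin.init (σ.symm (Fin.cons j β))), h.2⟩
      else none

/-- The sets `Ψ_m` associated to a family of maps `g_j : Y → Y` and a point `†`. -/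
def PsiSet {Y ι : Type*} (dag : Y) (g : ι → Y → Y) : ℕ → Set Y
  | 0 => {dag}
  | m + 1 => {dag} ∪ {y | ∀ j, g j y ∈ PsiSet dag g m}

/-- The annihilation condition: `⋃ m, Ψ_m = 𝒲` for the family `f_{ij}^σ`. -/
def annCond {n k : ℕ} (σ : Equiv.Perm (Fin (k + 1) → Fin n)) : Prop :=
  (⋃ m, PsiSet (none : OffDiag n k) (fun ij : Fin n × Fin n => fpair σ ij.1 ij.2) m) = Set.univ

/-!
Both conditions ask that an increasing chain of subsets `S 0 ⊆ S 1 ⊆ ⋯` of a finite set, in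
which `S (m + 1)` is a function of `S m`, exhausts the whole set. Such a chain is constant from
its first repetition on, and a repetition occurs within `Nat.card X` steps, so the union is
`S (Nat.card X)`. For `n = k + 1 = 2` both conditions thereby become finite checks, which are
decided for all 24 permutations.
-/

section Stabilization

variable {X : Type*} {S : ℕ → Set X}

lemma eq_of_le_of_eq_succ (F : Set X → Set X) (hF : ∀ m, S (m + 1) = F (S m)) {m : ℕ}
    (hm : S m = S (m + 1)) {n : ℕ} (hmn : m ≤ n) : S n = S m := by
  induction n, hmn using Nat.le_induction with
  | base => rfl
  | succ n _ ih => rw [hF, ih, ← hF, ← hm]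

lemma exists_le_card_eq_succ [Finite X] (hS : Monotone S) :
    ∃ m ≤ Nat.card X, S m = S (m + 1) := by
  by_contra! hne
  have hgrow : ∀ m ≤ Nat.card X + 1, m ≤ (S m).ncard := by
    intro m hm
    induction m with
    | zero => exact Nat.zero_le _
    | succ m ih =>
      have hlt : S m ⊂ S (m + 1) :=
        (hS m.le_succ).lt_of_ne (hne m (by omega))
      have := Set.ncard_lt_ncard hlt
      have := ih (by omega)
      omega
  have := hgrow _ le_rfl
  have := Set.ncard_le_card (S (Nat.card X + 1))
  omega

lemma iUnion_eq_of_card_le [Finite X] (F : Set X → Set X) (hF : ∀ m, S (m + 1) = F (S m))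
    (hS : Monotone S) {N : ℕ} (hN : Nat.card X ≤ N) : ⋃ m, S m = S N := by
  obtain ⟨m, hm, hrep⟩ := exists_le_card_eq_succ hS
  refine (Set.iUnion_subset fun n => ?_).antisymm (Set.subset_iUnion S N)
  rcases le_total n N with hnN | hNn
  · exact hS hnN
  · rw [eq_of_le_of_eq_succ F hF hrep (hm.trans (hN.trans hNn)),
      ← eq_of_le_of_eq_succ F hF hrep (hm.trans hN)]

end Stabilization

lemma SigmaSet_monotone {X : Type*} {n : ℕ} (f : Fin n → X → X) : Monotone (SigmaSet f) :=
  monotone_nat_of_le_succ fun _ => Set.subset_union_left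

lemma PsiSet_monotone {Y ι : Type*} (dag : Y) (g : ι → Y → Y) : Monotone (PsiSet dag g) := by
  refine monotone_nat_of_le_succ fun m => ?_
  induction m with
  | zero => exact Set.subset_union_left
  | succ m ih => exact Set.union_subset_union_right _ fun _ hy j => ih (hy j)

instance SigmaSet.decidableMem {X : Type*} [DecidableEq X] {n : ℕ} (f : Fin n → X → X) :
    ∀ m p, Decidable (p ∈ SigmaSet f m)
  | 0, p => inferInstanceAs (Decidable (p.1 = p.2))
  | m + 1, p =>
    have := SigmaSet.decidableMem f m
    inferInstanceAs (Decidable (p ∈ SigmaSet f m ∨ ∀ i, (f i p.1, f i p.2) ∈ SigmaSet f m))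

instance PsiSet.decidableMem {Y ι : Type*} [DecidableEq Y] [Fintype ι] (dag : Y)
    (g : ι → Y → Y) : ∀ m y, Decidable (y ∈ PsiSet dag g m)
  | 0, y => inferInstanceAs (Decidable (y = dag))
  | m + 1, y =>
    have := PsiSet.decidableMem dag g m
    inferInstanceAs (Decidable (y = dag ∨ ∀ j, g j y ∈ PsiSet dag g m))

instance {n k : ℕ} : DecidableEq (OffDiag n k) :=
  inferInstanceAs (DecidableEq (Option _))

instance {n k : ℕ} : Fintype (OffDiag n k) :=
  inferInstanceAs (Fintype (Option _))

/-- `†`, typed as `OffDiag n k` rather than `Option _`, so that instance search finds the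
decidability of `PsiSet` membership (it does not unfold `OffDiag`). -/
abbrev OffDiag.dagger (n k : ℕ) : OffDiag n k := none

lemma diagCond_iff_of_card_le {n k N : ℕ} (σ : Equiv.Perm (Fin (k + 1) → Fin n))
    (hN : Nat.card ((Fin k → Fin n) × (Fin k → Fin n)) ≤ N) :
    diagCond σ ↔ ∀ p, p ∈ SigmaSet (fword σ) N := by
  rw [diagCond,
    iUnion_eq_of_card_le (fun A => A ∪ {p | ∀ i, (fword σ i p.1, fword σ i p.2) ∈ A})
      (fun _ => rfl) (SigmaSet_monotone _) hN,
    Set.eq_univ_iff_forall]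

lemma annCond_iff_of_card_le {n k N : ℕ} (σ : Equiv.Perm (Fin (k + 1) → Fin n))
    (hN : Nat.card (OffDiag n k) ≤ N) :
    annCond σ ↔ ∀ y,
      y ∈ PsiSet (OffDiag.dagger n k) (fun ij : Fin n × Fin n => fpair σ ij.1 ij.2) N := by
  rw [annCond, iUnion_eq_of_card_le
    (S := PsiSet (none : OffDiag n k) fun ij : Fin n × Fin n => fpair σ ij.1 ij.2)
    (fun A => {none} ∪ {y | ∀ ij : Fin n × Fin n, fpair σ ij.1 ij.2 y ∈ A})
    (fun _ => rfl) (PsiSet_monotone _ _) hN]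
  exact Set.eq_univ_iff_forall

theorem stmt_9 :
    Nat.card {σ : Equiv.Perm (Fin (1 + 1) → Fin 2) // diagCond σ} = 8 ∧
    Nat.card {σ : Equiv.Perm (Fin (1 + 1) → Fin 2) // diagCond σ ∧ annCond σ} = 4 := by
  have hdiag (σ : Equiv.Perm (Fin (1 + 1) → Fin 2)) :=
    diagCond_iff_of_card_le (N := 4) σ (by rw [Nat.card_eq_fintype_card]; decide)
  have hann (σ : Equiv.Perm (Fin (1 + 1) → Fin 2)) :=
    annCond_iff_of_card_le (N := 3) σ (by rw [Nat.card_eq_fintype_card]; decide)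
  rw [Nat.card_congr (Equiv.subtypeEquivRight hdiag),
    Nat.card_congr (Equiv.subtypeEquivRight fun σ => and_congr (hdiag σ) (hann σ)),
    Nat.card_eq_fintype_card, Nat.card_eq_fintype_card]
  constructor <;> decide
end
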